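/- arXiv:2605.28263 — 4 statements merged into one kernel-verified Lean document; each statement's English description precedes it below -/
import Mathlib

section
/- An allocation p ∈ Δ(X) is weakly Pareto efficient (i.e., there is no p' ∈ Δ(X) with U_j(p') > U_j(p) for all j = 1,…,N) if and only if there exists a nonzero vector λ ∈ ℝ^N with λ_j ≥ 0 for all j such that p maximizes Σ_{j=1}^N λ_j U_j(q) over all q ∈ Δ(X). -/
open MeasureTheory
open scoped NNReal

/-!
Concavity of the utilities makes the set of utility vectors dominated by some feasible one
convex. Weak efficiency of `p` says this set misses the open orthant strictly above the
utility vector of `p`, so a Hahn–Banach hyperplane separates them; since the orthant is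
closed under increasing any coordinate, the normal of the hyperplane is nonnegative, and it
exhibits `p` as a maximizer of the weighted sum. The converse is immediate: a strict
improvement for everybody strictly increases every nonzero nonnegative weighted sum.
-/

theorem ProbabilityMeasure.exists_eq_smul_add_smul {X : Type*} [MeasurableSpace X]
    (μ ν : ProbabilityMeasure X) {t : ℝ≥0} (ht : t ≤ 1) :
    ∃ σ : ProbabilityMeasure X,
      (σ : Measure X) = t • (μ : Measure X) + (1 - t) • (ν : Measure X) := by
  refine ⟨⟨t • (μ : Measure X) + (1 - t) • (ν : Measure X), ⟨?_⟩⟩, rfl⟩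
  simp only [Measure.add_apply, Measure.smul_apply, measure_univ, smul_eq_mul, mul_one,
    ENNReal.smul_def]
  rw [← ENNReal.coe_add, add_tsub_cancel_of_le ht, ENNReal.coe_one]

theorem convex_lowerClosure_range_of_concave {X ι : Type*} [MeasurableSpace X]
    (U : ι → ProbabilityMeasure X → ℝ)
    (hU : ∀ (j : ι) (μ ν σ : ProbabilityMeasure X) (t : ℝ≥0), t ≤ 1 →
      (σ : Measure X) = t • (μ : Measure X) + (1 - t) • (ν : Measure X) →
      (t : ℝ) * U j μ + (1 - (t : ℝ)) * U j ν ≤ U j σ) :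
    Convex ℝ (lowerClosure (Set.range fun q j => U j q) : Set (ι → ℝ)) := by
  rintro v₁ ⟨_, ⟨q₁, rfl⟩, hv₁⟩ v₂ ⟨_, ⟨q₂, rfl⟩, hv₂⟩ a b ha hb hab
  have ht : (⟨a, ha⟩ : ℝ≥0) ≤ 1 := by change a ≤ 1; linarith
  obtain ⟨σ, hσ⟩ := ProbabilityMeasure.exists_eq_smul_add_smul q₁ q₂ ht
  refine ⟨_, ⟨σ, rfl⟩, fun j => ?_⟩
  have hb' : b = 1 - a := by linarith
  calc a * v₁ j + b * v₂ j ≤ a * U j q₁ + b * U j q₂ := by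
        gcongr
        exacts [hv₁ j, hv₂ j]
    _ ≤ U j σ := hb' ▸ hU j q₁ q₂ σ _ ht hσ

theorem dotProduct_lt_dotProduct_of_nonneg_of_ne_zero {ι : Type*} [Fintype ι]
    {w u v : ι → ℝ} (hw : 0 ≤ w) (hw₀ : w ≠ 0) (huv : ∀ j, u j < v j) :
    w ⬝ᵥ u < w ⬝ᵥ v := by
  obtain ⟨-, j, hj⟩ := Pi.lt_def.1 (lt_of_le_of_ne hw hw₀.symm)
  exact Finset.sum_lt_sum (fun i _ => mul_le_mul_of_nonneg_left (huv i).le (hw i))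
    ⟨j, Finset.mem_univ j, mul_lt_mul_of_pos_left (huv j) hj⟩

theorem nonneg_of_forall_mem_pi_Ioi_lt_dotProduct {ι : Type*} [Fintype ι]
    {w a : ι → ℝ} {c : ℝ} (h : ∀ x ∈ Set.univ.pi fun j => Set.Ioi (a j), c < w ⬝ᵥ x) :
    0 ≤ w := by
  classical
  intro j
  by_contra! hj
  rw [Pi.zero_apply] at hj
  have ha₁ : a + 1 ∈ Set.univ.pi fun j => Set.Ioi (a j) := Set.mem_univ_pi.2 fun j => by simp
  -- moving from `a + 1` in direction `Pi.single j 1` by `t` brings `w ⬝ᵥ ·` down to `c`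
  set t := (w ⬝ᵥ (a + 1) - c) / -w j
  have ht : 0 ≤ t := div_nonneg (by linarith [h _ ha₁]) (by linarith)
  have hmem : a + 1 + t • Pi.single j 1 ∈ Set.univ.pi fun j => Set.Ioi (a j) :=
    Set.mem_univ_pi.2 fun i => by
      have := Set.mem_univ_pi.1 ha₁ i
      by_cases hi : i = j
      · subst hi
        simp only [Set.mem_Ioi, Pi.add_apply, Pi.smul_apply, Pi.single_eq_same, Pi.one_apply,
          smul_eq_mul] at this ⊢
        linarith
      · simp [hi]
  have hty : t * w j = c - w ⬝ᵥ (a + 1) := by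
    simp only [t, div_neg, neg_mul, div_mul_cancel₀ _ hj.ne]
    ring
  have hval : w ⬝ᵥ (a + 1 + t • Pi.single j 1) = c := by
    rw [dotProduct_add, dotProduct_smul, dotProduct_single, smul_eq_mul, mul_one, hty]
    ring
  exact (h _ hmem).ne' hval

theorem exists_nonneg_dotProduct_le_of_disjoint_pi_Ioi {ι : Type*} [Fintype ι]
    {C : Set (ι → ℝ)} (hC : Convex ℝ C) (hC₀ : C.Nonempty) {a : ι → ℝ}
    (hdisj : Disjoint (Set.univ.pi fun j => Set.Ioi (a j)) C) :
    ∃ w : ι → ℝ, 0 ≤ w ∧ w ≠ 0 ∧ ∀ v ∈ C, w ⬝ᵥ v ≤ w ⬝ᵥ a := by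
  classical
  set O : Set (ι → ℝ) := Set.univ.pi fun j => Set.Ioi (a j)
  obtain ⟨f, u, hfO, hfC⟩ := geometric_hahn_banach_open
    (convex_pi fun j _ => convex_Ioi (a j)) (isOpen_set_pi Set.finite_univ fun j _ => isOpen_Ioi)
    hC hdisj
  set w := (dotProductEquiv ℝ ι).symm (-(f : (ι → ℝ) →ₗ[ℝ] ℝ))
  have hw : ∀ v, w ⬝ᵥ v = -f v := fun v =>
    LinearMap.congr_fun ((dotProductEquiv ℝ ι).apply_symm_apply _) v
  have hwO : ∀ x ∈ O, -u < w ⬝ᵥ x := fun x hx => by linarith [hw x, hfO x hx]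
  have ha : f a ≤ u := by
    have haO : a ∈ closure O := by
      rw [closure_pi_set]
      exact Set.mem_univ_pi.2 fun j => by simp
    exact closure_minimal (fun x hx => (hfO x hx).le) (isClosed_le f.continuous continuous_const)
      haO
  refine ⟨w, nonneg_of_forall_mem_pi_Ioi_lt_dotProduct hwO, fun hw₀ => ?_,
    fun v hv => by linarith [hw v, hw a, hfC v hv]⟩
  obtain ⟨v, hv⟩ := hC₀
  have hpos := hwO (a + 1) (Set.mem_univ_pi.2 fun j => by simp)
  have hv' := hw v
  rw [hw₀, zero_dotProduct] at hpos hv'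
  linarith [hfC v hv]

theorem not_exists_forall_lt_iff_exists_weights {α ι : Type*} [Fintype ι] (u : α → ι → ℝ)
    (hu : Convex ℝ (lowerClosure (Set.range u) : Set (ι → ℝ))) (p : α) :
    (¬ ∃ q, ∀ j, u p j < u q j) ↔
      ∃ w : ι → ℝ, 0 ≤ w ∧ w ≠ 0 ∧ ∀ q, w ⬝ᵥ u q ≤ w ⬝ᵥ u p := by
  constructor
  · intro hp
    have hdisj : Disjoint (Set.univ.pi fun j => Set.Ioi (u p j))
        (lowerClosure (Set.range u) : Set (ι → ℝ)) := by
      refine Set.disjoint_left.2 fun v hv ⟨_, ⟨q, rfl⟩, hvq⟩ => hp ⟨q, fun j => ?_⟩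
      exact (Set.mem_univ_pi.1 hv j).trans_le (hvq j)
    obtain ⟨w, hw, hw₀, hmax⟩ := exists_nonneg_dotProduct_le_of_disjoint_pi_Ioi hu
      ⟨u p, subset_lowerClosure ⟨p, rfl⟩⟩ hdisj
    exact ⟨w, hw, hw₀, fun q => hmax _ (subset_lowerClosure ⟨q, rfl⟩)⟩
  · rintro ⟨w, hw, hw₀, hmax⟩ ⟨q, hq⟩
    exact (hmax q).not_gt (dotProduct_lt_dotProduct_of_nonneg_of_ne_zero hw hw₀ hq)

theorem stmt0_general {X : Type*} [MeasurableSpace X]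
    (N : ℕ)
    (U : Fin N → ProbabilityMeasure X → ℝ)
    (hUconc : ∀ (j : Fin N) (μ ν σ : ProbabilityMeasure X) (t : ℝ≥0), t ≤ 1 →
      (σ : Measure X) = t • (μ : Measure X) + (1 - t) • (ν : Measure X) →
      (t : ℝ) * U j μ + (1 - (t : ℝ)) * U j ν ≤ U j σ)
    (p : ProbabilityMeasure X) :
    (¬ ∃ p' : ProbabilityMeasure X, ∀ j, U j p < U j p') ↔
      (∃ w : Fin N → ℝ, (∀ j, 0 ≤ w j) ∧ w ≠ 0 ∧
        ∀ q : ProbabilityMeasure X, ∑ j, w j * U j q ≤ ∑ j, w j * U j p) :=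
  not_exists_forall_lt_iff_exists_weights (fun q j => U j q)
    (convex_lowerClosure_range_of_concave U hUconc) p

/-- Let `X` be a nonempty compact metrizable space, `N ≥ 1`, and
`U_1, …, U_N : Δ(X) → ℝ` continuous concave utility functions on the space of Borel
probability measures with the topology of weak convergence.  An allocation `p ∈ Δ(X)`
is weakly Pareto efficient iff there is a nonzero nonnegative weight vector `w` such that
`p` maximizes `∑ j, w j * U j q` over `q ∈ Δ(X)`. -/
theorem stmt0 {X : Type*} [TopologicalSpace X] [TopologicalSpace.MetrizableSpace X]
    [CompactSpace X] [Nonempty X] [MeasurableSpace X] [BorelSpace X]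
    (N : ℕ) (hN : 1 ≤ N)
    (U : Fin N → ProbabilityMeasure X → ℝ)
    (hUcont : ∀ j, Continuous (U j))
    (hUconc : ∀ (j : Fin N) (μ ν σ : ProbabilityMeasure X) (t : ℝ≥0), t ≤ 1 →
      (σ : Measure X) = t • (μ : Measure X) + (1 - t) • (ν : Measure X) →
      (t : ℝ) * U j μ + (1 - (t : ℝ)) * U j ν ≤ U j σ)
    (p : ProbabilityMeasure X) :
    (¬ ∃ p' : ProbabilityMeasure X, ∀ j, U j p < U j p') ↔
      (∃ w : Fin N → ℝ, (∀ j, 0 ≤ w j) ∧ w ≠ 0 ∧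
        ∀ q : ProbabilityMeasure X, ∑ j, w j * U j q ≤ ∑ j, w j * U j p) :=
  stmt0_general N U hUconc p
end

section
/- Fix δ > 0, a vector λ ∈ ℝ^N with λ_j ≥ 0 and Σ_j λ_j = 1, and a function G : Δ(X) → ℝ that is invariant under allocation swaps, i.e., G(p_{i↔j}) = G(p) for all p ∈ Δ(X) and all i,j. If p ∈ Δ(X) maximizes Q(q) = Σ_{j=1}^N λ_j U_j(q) − δ·G(q) over Δ(X), then there exists an agent i with λ_i > 0 who envies no agent at p, i.e., U_i(p^i) ≥ U_i(p^k) for all k = 1,…,N. -/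
open MeasureTheory
open scoped NNReal

/-- The `j`-th marginal of a probability measure on `X ⊆ Y^N`: the pushforward under the
`j`-th coordinate projection. -/
noncomputable def marginal {Y : Type*} [MeasurableSpace Y] {N : ℕ} {X : Set (Fin N → Y)}
    (p : ProbabilityMeasure ↥X) (j : Fin N) : ProbabilityMeasure Y :=
  p.map (f := fun x => (x : Fin N → Y) j)
    (((measurable_pi_apply j).comp measurable_subtype_coe).aemeasurable)

/-- The allocation swap `p_{i↔j}`: the pushforward of `p` under the coordinate-swap map
`T_{i↔j}` (which maps `X` into `X` by permutation invariance). -/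
noncomputable def swapAlloc {Y : Type*} [MeasurableSpace Y] {N : ℕ} {X : Set (Fin N → Y)}
    (hXswap : ∀ i j : Fin N, ∀ x ∈ X, x ∘ Equiv.swap i j ∈ X)
    (i j : Fin N) (p : ProbabilityMeasure ↥X) : ProbabilityMeasure ↥X :=
  p.map (f := fun x => (⟨(x : Fin N → Y) ∘ Equiv.swap i j, hXswap i j x x.2⟩ : ↥X))
    (Measurable.aemeasurable (by
      apply Measurable.subtype_mk
      apply measurable_pi_iff.mpr
      intro k
      exact (measurable_pi_apply _).comp measurable_subtype_coe))

section Aux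
variable {Y : Type*} [MeasurableSpace Y] {N : ℕ} {X : Set (Fin N → Y)}

lemma xperm (hXswap : ∀ i j : Fin N, ∀ x ∈ X, x ∘ Equiv.swap i j ∈ X)
    (σ : Equiv.Perm (Fin N)) : ∀ x ∈ X, x ∘ σ ∈ X := by
  refine Equiv.Perm.swap_induction_on σ ?_ ?_
  · intro x hx; simpa using hx
  · intro f a b hab ih x hx
    have : (x ∘ Equiv.swap a b) ∘ f ∈ X := ih _ (hXswap a b x hx)
    simpa [Function.comp_def] using this

lemma measurable_permMap (hXswap : ∀ i j : Fin N, ∀ x ∈ X, x ∘ Equiv.swap i j ∈ X)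
    (σ : Equiv.Perm (Fin N)) :
    Measurable (fun x : ↥X => (⟨(x : Fin N → Y) ∘ σ, xperm hXswap σ x x.2⟩ : ↥X)) := by
  apply Measurable.subtype_mk
  apply measurable_pi_iff.mpr
  intro k
  exact (measurable_pi_apply _).comp measurable_subtype_coe

noncomputable def permAlloc (hXswap : ∀ i j : Fin N, ∀ x ∈ X, x ∘ Equiv.swap i j ∈ X)
    (σ : Equiv.Perm (Fin N)) (p : ProbabilityMeasure ↥X) : ProbabilityMeasure ↥X :=
  p.map (f := fun x => (⟨(x : Fin N → Y) ∘ σ, xperm hXswap σ x x.2⟩ : ↥X))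
    (measurable_permMap hXswap σ).aemeasurable

lemma marginal_permAlloc (hXswap : ∀ i j : Fin N, ∀ x ∈ X, x ∘ Equiv.swap i j ∈ X)
    (σ : Equiv.Perm (Fin N)) (p : ProbabilityMeasure ↥X) (j : Fin N) :
    marginal (permAlloc hXswap σ p) j = marginal p (σ j) := by
  apply MeasureTheory.ProbabilityMeasure.toMeasure_injective
  simp only [marginal, permAlloc, ProbabilityMeasure.toMeasure_map]
  rw [Measure.map_map (show Measurable (fun x : ↥X => (x : Fin N → Y) j) from
    (measurable_pi_apply j).comp measurable_subtype_coe) (measurable_permMap hXswap σ)]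
  rfl

lemma permAlloc_one (hXswap : ∀ i j : Fin N, ∀ x ∈ X, x ∘ Equiv.swap i j ∈ X)
    (p : ProbabilityMeasure ↥X) : permAlloc hXswap 1 p = p := by
  apply MeasureTheory.ProbabilityMeasure.toMeasure_injective
  simp only [permAlloc, ProbabilityMeasure.toMeasure_map]
  have h : (fun x : ↥X => (⟨(x : Fin N → Y) ∘ (1 : Equiv.Perm (Fin N)),
      xperm hXswap 1 x x.2⟩ : ↥X)) = id := by
    funext x; apply Subtype.ext; rfl
  rw [h, Measure.map_id]

lemma permAlloc_swap_mul (hXswap : ∀ i j : Fin N, ∀ x ∈ X, x ∘ Equiv.swap i j ∈ X)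
    (a b : Fin N) (f : Equiv.Perm (Fin N)) (p : ProbabilityMeasure ↥X) :
    permAlloc hXswap (Equiv.swap a b * f) p = permAlloc hXswap f (swapAlloc hXswap a b p) := by
  apply MeasureTheory.ProbabilityMeasure.toMeasure_injective
  simp only [permAlloc, swapAlloc, ProbabilityMeasure.toMeasure_map]
  rw [Measure.map_map (measurable_permMap hXswap f)
    (by apply Measurable.subtype_mk; apply measurable_pi_iff.mpr; intro k
        exact (measurable_pi_apply _).comp measurable_subtype_coe)]
  congr 1


lemma G_permAlloc (hXswap : ∀ i j : Fin N, ∀ x ∈ X, x ∘ Equiv.swap i j ∈ X)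
    (G : ProbabilityMeasure ↥X → ℝ)
    (hGinv : ∀ (i j : Fin N) (p : ProbabilityMeasure ↥X), G (swapAlloc hXswap i j p) = G p)
    (σ : Equiv.Perm (Fin N)) : ∀ p : ProbabilityMeasure ↥X,
    G (permAlloc hXswap σ p) = G p := by
  refine Equiv.Perm.swap_induction_on σ ?_ ?_
  · intro p; rw [permAlloc_one]
  · intro f a b hab ih p
    rw [permAlloc_swap_mul, ih, hGinv]

end Aux
/-- **Lucky lemma.**  In the general allocation setting (compact
permutation-invariant `X ⊆ Y^N`, continuous concave utilities `U_j : Δ(Y) → ℝ`), fix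
`δ > 0`, a weight vector `w` in the simplex, and a swap-invariant `G : Δ(X) → ℝ`.
If `p` maximizes `Q(q) = ∑ j, w j * U j (q^j) − δ G(q)` over `Δ(X)`, then some agent `i`
with `w i > 0` envies no one at `p`. -/
theorem stmt2 {Y : Type*} [TopologicalSpace Y] [TopologicalSpace.MetrizableSpace Y]
    [MeasurableSpace Y] [BorelSpace Y]
    (N : ℕ) (hN : 1 ≤ N) (X : Set (Fin N → Y)) (hXne : X.Nonempty) (hXcomp : IsCompact X)
    (hXswap : ∀ i j : Fin N, ∀ x ∈ X, x ∘ Equiv.swap i j ∈ X)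
    (U : Fin N → ProbabilityMeasure Y → ℝ)
    (hUcont : ∀ j, Continuous (U j))
    (hUconc : ∀ (j : Fin N) (μ ν σ : ProbabilityMeasure Y) (t : ℝ≥0), t ≤ 1 →
      (σ : Measure Y) = t • (μ : Measure Y) + (1 - t) • (ν : Measure Y) →
      (t : ℝ) * U j μ + (1 - (t : ℝ)) * U j ν ≤ U j σ)
    (δ : ℝ) (hδ : 0 < δ)
    (w : Fin N → ℝ) (hw0 : ∀ j, 0 ≤ w j) (hw1 : ∑ j, w j = 1)
    (G : ProbabilityMeasure ↥X → ℝ)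
    (hGinv : ∀ (i j : Fin N) (p : ProbabilityMeasure ↥X), G (swapAlloc hXswap i j p) = G p)
    (p : ProbabilityMeasure ↥X)
    (hmax : ∀ q : ProbabilityMeasure ↥X,
      ∑ j, w j * U j (marginal q j) - δ * G q ≤ ∑ j, w j * U j (marginal p j) - δ * G p) :
    ∃ i : Fin N, 0 < w i ∧ ∀ k : Fin N, U i (marginal p k) ≤ U i (marginal p i) := by
  classical
  -- Key inequality: no permutation of marginals can beat the identity.
  have star : ∀ σ : Equiv.Perm (Fin N),
      ∑ j, w j * U j (marginal p (σ j)) ≤ ∑ j, w j * U j (marginal p j) := by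
    intro σ
    have h := hmax (permAlloc hXswap σ p)
    have hG := G_permAlloc hXswap G hGinv σ p
    have hm : ∀ j, marginal (permAlloc hXswap σ p) j = marginal p (σ j) :=
      marginal_permAlloc hXswap σ p
    simp only [hm, hG] at h
    linarith
  by_contra hcon
  push_neg at hcon
  -- every positive-weight agent envies someone
  have henvy : ∀ i : Fin N, 0 < w i → ∃ k, U i (marginal p i) < U i (marginal p k) := by
    intro i hi
    obtain ⟨k, hk⟩ := hcon i hi
    exact ⟨k, hk⟩
  -- Case A: some positive-weight agent envies a zero-weight agent.
  by_cases hA : ∃ i k : Fin N, 0 < w i ∧ w k = 0 ∧ U i (marginal p i) < U i (marginal p k)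
  · obtain ⟨i, k, hwi, hwk, henv⟩ := hA
    have hik : i ≠ k := fun h => by rw [h, hwk] at hwi; exact lt_irrefl 0 hwi
    have hlt : ∑ j, w j * U j (marginal p j) <
        ∑ j, w j * U j (marginal p (Equiv.swap i k j)) := by
      apply Finset.sum_lt_sum
      · intro j _
        rcases eq_or_ne j i with rfl | hji
        · rw [Equiv.swap_apply_left]
          exact mul_le_mul_of_nonneg_left henv.le (hw0 j)
        rcases eq_or_ne j k with rfl | hjk
        · rw [hwk]; simp
        · rw [Equiv.swap_apply_of_ne_of_ne hji hjk]
      · refine ⟨i, Finset.mem_univ i, ?_⟩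
        rw [Equiv.swap_apply_left]
        exact mul_lt_mul_of_pos_left henv hwi
    exact absurd (star (Equiv.swap i k)) (not_le.mpr hlt)
  · push_neg at hA
    -- choose for each positive-weight agent an envied target
    set f : Fin N → Fin N := fun i =>
      if h : 0 < w i then Classical.choose (henvy i h) else i with hf
    have hfenv : ∀ i, 0 < w i → U i (marginal p i) < U i (marginal p (f i)) := by
      intro i hi
      simp only [hf, dif_pos hi]
      exact Classical.choose_spec (henvy i hi)
    have hfpos : ∀ i, 0 < w i → 0 < w (f i) := by
      intro i hi
      rcases (hw0 (f i)).lt_or_eq with h | h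
      · exact h
      · exact absurd (hfenv i hi) (not_lt.mpr (hA i (f i) hi h.symm))
    -- a starting positive-weight agent
    have hNpos : 0 < N := hN
    have hex : ∃ i : Fin N, 0 < w i := by
      by_contra h
      push_neg at h
      have : ∑ j, w j = 0 := Finset.sum_eq_zero fun j _ => le_antisymm (h j) (hw0 j)
      rw [hw1] at this; norm_num at this
    obtain ⟨i₀, hi₀⟩ := hex
    have hposn : ∀ n : ℕ, 0 < w (f^[n] i₀) := by
      intro n
      induction n with
      | zero => simpa using hi₀
      | succ n ih => rw [Function.iterate_succ_apply']; exact hfpos _ ih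
    -- find a periodic point
    obtain ⟨a, b, hab, heq⟩ :=
      Finite.exists_ne_map_eq_of_infinite (fun n : ℕ => f^[n] i₀)
    wlog hlt : a < b generalizing a b
    · exact this b a hab.symm heq.symm (by omega)
    set x : Fin N := f^[a] i₀ with hx
    set m : ℕ := b - a with hm
    have hm1 : 1 ≤ m := by omega
    have hper : f^[m] x = x := by
      rw [hx, ← Function.iterate_add_apply]
      have : m + a = b := by omega
      rw [this]
      exact heq.symm
    set O : Set (Fin N) := Set.range (fun s : ℕ => f^[s] x) with hO
    have hfO : ∀ y ∈ O, f y ∈ O := by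
      rintro y ⟨s, rfl⟩
      exact ⟨s + 1, show f^[s+1] x = f (f^[s] x) from Function.iterate_succ_apply' f s x⟩
    have hinvO : ∀ y ∈ O, f^[m - 1] (f y) = y := by
      rintro y ⟨s, rfl⟩
      have h1 : f (f^[s] x) = f^[s + 1] x := (Function.iterate_succ_apply' f s x).symm
      rw [h1, ← Function.iterate_add_apply]
      have h2 : m - 1 + (s + 1) = s + m := by omega
      rw [h2, Function.iterate_add_apply, hper]
    have hOpos : ∀ y ∈ O, 0 < w y := by
      rintro y ⟨s, rfl⟩
      show 0 < w (f^[s] (f^[a] i₀))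
      rw [← Function.iterate_add_apply]
      exact hposn _
    -- the permutation: f on the orbit, identity elsewhere
    set g : Fin N → Fin N := fun y => if y ∈ O then f y else y with hg
    have hginj : Function.Injective g := by
      intro u v huv
      by_cases hu : u ∈ O <;> by_cases hv : v ∈ O
      · have : f u = f v := by simpa [hg, hu, hv] using huv
        have := congrArg (f^[m - 1]) this
        rwa [hinvO u hu, hinvO v hv] at this
      · exfalso; apply hv
        have : f u = v := by simpa [hg, hu, hv] using huv
        rw [← this]; exact hfO u hu
      · exfalso; apply hu
        have : f v = u := by simpa [hg, hu, hv] using huv.symm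
        rw [← this]; exact hfO v hv
      · simpa [hg, hu, hv] using huv
    set σ : Equiv.Perm (Fin N) :=
      Equiv.ofBijective g (Finite.injective_iff_bijective.mp hginj) with hσ
    have hσapp : ∀ j, σ j = g j := fun j => rfl
    have hxO : x ∈ O := ⟨0, rfl⟩
    have hlt2 : ∑ j, w j * U j (marginal p j) < ∑ j, w j * U j (marginal p (σ j)) := by
      apply Finset.sum_lt_sum
      · intro j _
        rw [hσapp]
        by_cases hj : j ∈ O
        · simp only [hg, if_pos hj]
          exact mul_le_mul_of_nonneg_left (hfenv j (hOpos j hj)).le (hw0 j)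
        · simp only [hg, if_neg hj]
          exact le_rfl
      · refine ⟨x, Finset.mem_univ x, ?_⟩
        rw [hσapp]
        simp only [hg, if_pos hxO]
        exact mul_lt_mul_of_pos_left (hfenv x (hOpos x hxO)) (hOpos x hxO)
    exact absurd (star σ) (not_le.mpr hlt2)
end

section
/- The set A = {a : a is a finite Borel measure on X, a(B) ∈ ℕ for every Borel set B ⊆ X, and a(X) ≤ α} is closed in the weak topology on finite Borel measures: if a net (a_i) of elements of A converges weakly to a finite Borel measure a (i.e., ∫ f da_i → ∫ f da for every bounded continuous f : X → ℝ), then a ∈ A. -/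
/-!
Integrality passes to weak limits through the portmanteau inequalities. If `n < a K` for a
closed `K`, then eventually `n < a_i (thickening δ K)`, so `n + 1 ≤ a_i (thickening δ K)` by
integrality, and the limsup inequality for the closed set `cthickening δ K` gives
`n + 1 ≤ a (cthickening δ K)`; letting `δ → 0` yields `n + 1 ≤ a K`. Hence `a` is integer-valued
on closed sets, and inner regularity by closed sets extends this to all Borel sets. The mass
bound is continuity of the total mass.
-/

open MeasureTheory Filter Metric Topology
open scoped ENNReal

lemma ENNReal.exists_natCast_eq_of_forall_lt_imp_add_one_le {c : ℝ≥0∞} (hc : c ≠ ∞)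
    (h : ∀ n : ℕ, (n : ℝ≥0∞) < c → (n : ℝ≥0∞) + 1 ≤ c) : ∃ n : ℕ, c = n := by
  by_contra! hne
  have hlt : ∀ n : ℕ, (n : ℝ≥0∞) < c := by
    intro n
    induction n with
    | zero => exact_mod_cast pos_iff_ne_zero.mpr (by exact_mod_cast hne 0)
    | succ n ih => exact_mod_cast (h n ih).lt_of_ne (by exact_mod_cast (hne (n + 1)).symm)
  obtain ⟨n, hn⟩ := ENNReal.exists_nat_gt hc
  exact (hlt n).not_gt hn

lemma ENNReal.natCast_add_one_le_of_lt {n k : ℕ} (h : (n : ℝ≥0∞) < k) : (n : ℝ≥0∞) + 1 ≤ k := by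
  exact_mod_cast h

namespace MeasureTheory.FiniteMeasure

variable {Ω ι : Type*} [PseudoEMetricSpace Ω] [MeasurableSpace Ω] [OpensMeasurableSpace Ω]
  {L : Filter ι} [L.NeBot] {μs : ι → FiniteMeasure Ω} {μ : FiniteMeasure Ω}

lemma measure_le_liminf_measure_thickening_of_tendsto
    (hμ : Tendsto μs L (𝓝 μ)) {δ : ℝ} (hδ : 0 < δ) {K : Set Ω} (hK : MeasurableSet K) :
    (μ : Measure Ω) K ≤ L.liminf fun i ↦ (μs i : Measure Ω) (thickening δ K) := by
  calc (μ : Measure Ω) K = ∫⁻ x, K.indicator 1 x ∂μ := (lintegral_indicator_one hK).symm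
    _ ≤ ∫⁻ x, thickenedIndicator hδ K x ∂μ := lintegral_mono fun x ↦ by
        by_cases hx : x ∈ K
        · simp [hx, thickenedIndicator_one hδ K hx]
        · simp [hx]
    _ = L.liminf fun i ↦ ∫⁻ x, thickenedIndicator hδ K x ∂(μs i) :=
        ((tendsto_iff_forall_lintegral_tendsto.mp hμ _).liminf_eq).symm
    _ ≤ L.liminf fun i ↦ ∫⁻ x, (thickening δ K).indicator 1 x ∂(μs i) :=
        liminf_le_liminf (Eventually.of_forall fun i ↦ lintegral_mono fun x ↦ by
          by_cases hx : x ∈ thickening δ K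
          · simpa [hx] using thickenedIndicator_le_one hδ K x
          · simp [hx, thickenedIndicator_zero hδ K hx])
    _ = _ := by simp_rw [lintegral_indicator_one isOpen_thickening.measurableSet]

lemma natCast_add_one_le_measure_cthickening_of_tendsto
    (hμ : Tendsto μs L (𝓝 μ)) {δ : ℝ} (hδ : 0 < δ) {K : Set Ω} (hK : MeasurableSet K)
    (hnat : ∀ i, ∃ k : ℕ, (μs i : Measure Ω) (thickening δ K) = k) {n : ℕ}
    (hn : n < (μ : Measure Ω) K) :
    (n : ℝ≥0∞) + 1 ≤ (μ : Measure Ω) (cthickening δ K) := by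
  have hev : ∀ᶠ i in L, (n : ℝ≥0∞) < (μs i : Measure Ω) (thickening δ K) :=
    eventually_lt_of_lt_liminf <|
      hn.trans_le (measure_le_liminf_measure_thickening_of_tendsto hμ hδ hK)
  calc (n : ℝ≥0∞) + 1 ≤ L.limsup fun i ↦ (μs i : Measure Ω) (cthickening δ K) := by
        refine le_limsup_of_frequently_le (hev.mono fun i hi ↦ ?_).frequently
          (by isBoundedDefault)
        obtain ⟨k, hk⟩ := hnat i
        rw [hk] at hi
        calc (n : ℝ≥0∞) + 1 ≤ k := ENNReal.natCast_add_one_le_of_lt hi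
          _ = _ := hk.symm
          _ ≤ _ := measure_mono (thickening_subset_cthickening δ K)
    _ ≤ _ := limsup_measure_closed_le_of_tendsto hμ isClosed_cthickening

lemma exists_natCast_eq_measure_of_tendsto
    (hμ : Tendsto μs L (𝓝 μ)) (hnat : ∀ i U, IsOpen U → ∃ k : ℕ, (μs i : Measure Ω) U = k)
    {K : Set Ω} (hK : IsClosed K) : ∃ n : ℕ, (μ : Measure Ω) K = n := by
  refine ENNReal.exists_natCast_eq_of_forall_lt_imp_add_one_le (measure_ne_top _ _) fun n hn ↦ ?_
  have hcth := (tendsto_measure_cthickening_of_isClosed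
    ⟨1, one_pos, measure_ne_top (μ : Measure Ω) _⟩ hK).mono_left
      (nhdsWithin_le_nhds (s := Set.Ioi 0))
  refine ge_of_tendsto hcth (eventually_mem_nhdsWithin.mono fun δ (hδ : 0 < δ) ↦ ?_)
  exact natCast_add_one_le_measure_cthickening_of_tendsto hμ hδ hK.measurableSet
    (fun i ↦ hnat i _ isOpen_thickening) hn

end MeasureTheory.FiniteMeasure

lemma MeasureTheory.Measure.exists_natCast_eq_of_forall_isClosed {Ω : Type*}
    [TopologicalSpace Ω] [MeasurableSpace Ω] (μ : Measure Ω) [IsFiniteMeasure μ] [μ.WeaklyRegular]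
    (h : ∀ K, IsClosed K → ∃ n : ℕ, μ K = n) {B : Set Ω} (hB : MeasurableSet B) :
    ∃ n : ℕ, μ B = n := by
  refine ENNReal.exists_natCast_eq_of_forall_lt_imp_add_one_le (measure_ne_top _ _) fun n hn ↦ ?_
  obtain ⟨K, hKB, hK, hnK⟩ := hB.exists_lt_isClosed_of_ne_top (measure_ne_top μ B) hn
  obtain ⟨k, hk⟩ := h K hK
  rw [hk] at hnK
  calc (n : ℝ≥0∞) + 1 ≤ k := ENNReal.natCast_add_one_le_of_lt hnK
    _ = μ K := hk.symm
    _ ≤ μ B := measure_mono hKB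

theorem stmt6_general {X : Type*} [MetricSpace X]
    [MeasurableSpace X] [BorelSpace X]
    (α : ℕ)
    {ι : Type*} (F : Filter ι) [F.NeBot]
    (aNet : ι → Measure X)
    (haFin : ∀ i, IsFiniteMeasure (aNet i))
    (haInt : ∀ i, ∀ B : Set X, MeasurableSet B → ∃ n : ℕ, aNet i B = n)
    (haBdd : ∀ i, aNet i Set.univ ≤ α)
    (a : Measure X) (hfin : IsFiniteMeasure a)
    (hconv : ∀ f : X → ℝ, Continuous f → (∃ C : ℝ, ∀ x, |f x| ≤ C) →
      Filter.Tendsto (fun i => ∫ x, f x ∂(aNet i)) F (nhds (∫ x, f x ∂a))) :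
    (∀ B : Set X, MeasurableSet B → ∃ n : ℕ, a B = n) ∧ a Set.univ ≤ α := by
  let μs : ι → FiniteMeasure X := fun i ↦ ⟨aNet i, haFin i⟩
  let μ : FiniteMeasure X := ⟨a, hfin⟩
  have hlim : Tendsto μs F (𝓝 μ) :=
    FiniteMeasure.tendsto_iff_forall_integral_tendsto.mpr fun f ↦
      hconv f f.continuous ⟨‖f‖, fun x ↦ f.norm_coe_le_norm x⟩
  refine ⟨fun B hB ↦ a.exists_natCast_eq_of_forall_isClosed (fun K hK ↦
    FiniteMeasure.exists_natCast_eq_measure_of_tendsto hlim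
      (fun i U hU ↦ haInt i U hU.measurableSet) hK) hB, ?_⟩
  have hmass : μ.mass ≤ α := le_of_tendsto' hlim.mass fun i ↦ by
    rw [← ENNReal.coe_le_coe, FiniteMeasure.ennreal_mass]
    exact_mod_cast haBdd i
  exact (FiniteMeasure.ennreal_mass (μ := μ)).symm.trans_le (by exact_mod_cast hmass)

/-- Let `(X,d)` be a compact metric space and `α` a positive integer.
The set of finite integer-valued Borel measures `a` on `X` with `a(X) ≤ α` is closed
under weak convergence of nets: if a net `(a_i)` of such measures converges weakly to a
finite Borel measure `a` (i.e. `∫ f da_i → ∫ f da` for every bounded continuous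
`f : X → ℝ`), then `a` is integer-valued and `a(X) ≤ α`. -/
theorem stmt6 {X : Type*} [MetricSpace X] [CompactSpace X]
    [MeasurableSpace X] [BorelSpace X]
    (α : ℕ) (hα : 0 < α)
    {ι : Type*} (F : Filter ι) [F.NeBot]
    (aNet : ι → Measure X)
    (haFin : ∀ i, IsFiniteMeasure (aNet i))
    (haInt : ∀ i, ∀ B : Set X, MeasurableSet B → ∃ n : ℕ, aNet i B = n)
    (haBdd : ∀ i, aNet i Set.univ ≤ α)
    (a : Measure X) (hfin : IsFiniteMeasure a)
    (hconv : ∀ f : X → ℝ, Continuous f → (∃ C : ℝ, ∀ x, |f x| ≤ C) →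
      Filter.Tendsto (fun i => ∫ x, f x ∂(aNet i)) F (nhds (∫ x, f x ∂a))) :
    (∀ B : Set X, MeasurableSet B → ∃ n : ℕ, a B = n) ∧ a Set.univ ≤ α :=
  stmt6_general α F aNet haFin haInt haBdd a hfin hconv
end

section
/- For every partition of unity into simple functions (f_1^0,…,f_N^0) on (L, B) there exist K ≥ 1, indicator partitions (1_{A_{k,1}},…,1_{A_{k,N}}) for k = 1,…,K, and coefficients a_1,…,a_K ≥ 0 with Σ_{k=1}^K a_k = 1, such that f_j^0(x) = Σ_{k=1}^K a_k · 1_{A_{k,j}}(x) for every j = 1,…,N and every x ∈ L. -/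
open MeasureTheory

/-- Let `(L,B)` be a measurable space and `N ≥ 1`.  Every partition of
unity into simple functions `(f_1⁰, …, f_N⁰)` (measurable, finite range, nonnegative,
summing to `1` pointwise) is a convex combination of indicator partitions: there exist
`K ≥ 1`, tuples `(A_{k,1}, …, A_{k,N})` of pairwise disjoint measurable sets covering `L`,
and coefficients `a_k ≥ 0` with `∑ₖ a_k = 1`, such that
`f_j⁰(x) = ∑ₖ a_k · 1_{A_{k,j}}(x)` for all `j` and `x`. -/
theorem stmt11 {L : Type*} [MeasurableSpace L]
    (N : ℕ) (hN : 1 ≤ N)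
    (f : Fin N → L → ℝ)
    (hmeas : ∀ j, Measurable (f j))
    (hfin : ∀ j, (Set.range (f j)).Finite)
    (hnonneg : ∀ j x, 0 ≤ f j x)
    (hsum : ∀ x, ∑ j, f j x = 1) :
    ∃ K : ℕ, 1 ≤ K ∧
      ∃ (A : Fin K → Fin N → Set L) (a : Fin K → ℝ),
        (∀ k j, MeasurableSet (A k j)) ∧
        (∀ k, ∀ j j' : Fin N, j ≠ j' → Disjoint (A k j) (A k j')) ∧
        (∀ k, (⋃ j, A k j) = Set.univ) ∧
        (∀ k, 0 ≤ a k) ∧ (∑ k, a k = 1) ∧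
        (∀ j x, f j x = ∑ k, a k * (A k j).indicator 1 x) := by
  classical
  -- extended coordinate functions and partial sums
  set f' : ℕ → L → ℝ := fun i x => if h : i < N then f ⟨i, h⟩ x else 0 with hf'def
  set g : ℕ → L → ℝ := fun j x => ∑ i ∈ Finset.range j, f' i x with hgdef
  have hf'nonneg : ∀ i x, 0 ≤ f' i x := by
    intro i x
    simp only [hf'def]
    split
    · exact hnonneg _ x
    · exact le_refl 0
  have hf'meas : ∀ i, Measurable (f' i) := by
    intro i
    simp only [hf'def]
    split
    · exact hmeas _
    · exact measurable_const
  have hf'eq : ∀ (j : Fin N) x, f' (↑j) x = f j x := by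
    intro j x
    simp [hf'def, j.isLt]
  have hgmeas : ∀ j, Measurable (g j) := fun j =>
    Finset.measurable_sum _ fun i _ => hf'meas i
  have hgsucc : ∀ j x, g (j + 1) x = g j x + f' j x := fun j x =>
    Finset.sum_range_succ _ _
  have hg0 : ∀ x, g 0 x = 0 := fun x => Finset.sum_range_zero _
  have hgN : ∀ x, g N x = 1 := by
    intro x
    have h1 : ∑ i : Fin N, f' (↑i) x = ∑ i ∈ Finset.range N, f' i x :=
      Fin.sum_univ_eq_sum_range (fun i => f' i x) N
    have h2 : ∑ i : Fin N, f' (↑i) x = ∑ i : Fin N, f i x :=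
      Finset.sum_congr rfl (fun i _ => hf'eq i x)
    simp only [hgdef]
    rw [← h1, h2, hsum x]
  have hgmono : ∀ x, Monotone fun j => g j x := by
    intro x
    apply monotone_nat_of_le_succ
    intro j
    rw [hgsucc]
    linarith [hf'nonneg j x]
  have hgnonneg : ∀ j x, 0 ≤ g j x := by
    intro j x
    have := hg0 x
    have h := hgmono x (Nat.zero_le j)
    simpa [this] using h
  -- finiteness of the value set
  have hgfin : ∀ j, (Set.range (g j)).Finite := by
    intro j
    have hp : (Set.pi Set.univ fun i : Fin N => Set.range (f i)).Finite :=
      Set.Finite.pi fun i => hfin i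
    apply Set.Finite.subset
      (hp.image fun v : Fin N → ℝ => ∑ i ∈ Finset.range j, if h : i < N then v ⟨i, h⟩ else 0)
    rintro _ ⟨x, rfl⟩
    exact ⟨fun i => f i x, fun i _ => ⟨x, rfl⟩, by simp [hgdef, hf'def]⟩
  have hVfin : (({0, 1} : Set ℝ) ∪ ⋃ j ∈ Finset.range (N + 1), Set.range (g j)).Finite := by
    apply Set.Finite.union ((Set.finite_singleton (1:ℝ)).insert 0)
    exact Set.Finite.biUnion (Finset.range (N + 1)).finite_toSet fun j _ => hgfin j
  set V : Finset ℝ := hVfin.toFinset with hVdef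
  have hmemV : ∀ (j : ℕ) (x : L), j ≤ N → g j x ∈ V := by
    intro j x hj
    simp only [hVdef, Set.Finite.mem_toFinset]
    right
    exact Set.mem_iUnion₂.mpr ⟨j, Finset.mem_range.mpr (by omega), ⟨x, rfl⟩⟩
  have h0V : (0 : ℝ) ∈ V := by
    simp only [hVdef, Set.Finite.mem_toFinset]
    left; left; rfl
  have h1V : (1 : ℝ) ∈ V := by
    simp only [hVdef, Set.Finite.mem_toFinset]
    left; right; rfl
  have hVnonneg : ∀ t ∈ V, (0 : ℝ) ≤ t := by
    intro t ht
    simp only [hVdef, Set.Finite.mem_toFinset, Set.mem_union, Set.mem_insert_iff,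
      Set.mem_singleton_iff, Set.mem_iUnion] at ht
    rcases ht with (rfl | rfl) | ⟨j, _, x, rfl⟩
    · exact le_refl 0
    · exact zero_le_one
    · exact hgnonneg j x
  have hVle1 : ∀ t ∈ V, t ≤ 1 := by
    intro t ht
    simp only [hVdef, Set.Finite.mem_toFinset, Set.mem_union, Set.mem_insert_iff,
      Set.mem_singleton_iff, Set.mem_iUnion] at ht
    rcases ht with (rfl | rfl) | ⟨j, hj, x, rfl⟩
    · exact zero_le_one
    · exact le_refl 1
    · rw [← hgN x]
      exact hgmono x (by simpa [Nat.lt_succ_iff] using hj)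
  set n := V.card with hndef
  have hn2 : 2 ≤ n := by
    rw [hndef]
    exact Finset.one_lt_card.mpr ⟨0, h0V, 1, h1V, by norm_num⟩
  set e := V.orderIsoOfFin hndef.symm with hedef
  set w : ℕ → ℝ := fun i => (e ⟨min i (n - 1), by omega⟩ : ℝ) with hwdef
  have hwmem : ∀ i, w i ∈ V := fun i => (e _).2
  have hw_le : ∀ i j : ℕ, i ≤ n - 1 → j ≤ n - 1 → (w i ≤ w j ↔ i ≤ j) := by
    intro i j hi hj
    simp only [hwdef]
    rw [Subtype.coe_le_coe, e.le_iff_le, Fin.mk_le_mk]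
    omega
  have hw_lt : ∀ i j : ℕ, i ≤ n - 1 → j ≤ n - 1 → (w i < w j ↔ i < j) := by
    intro i j hi hj
    simp only [hwdef]
    rw [Subtype.coe_lt_coe, e.lt_iff_lt, Fin.mk_lt_mk]
    omega
  have hwmono : Monotone w := by
    intro i j hij
    simp only [hwdef]
    exact Subtype.coe_le_coe.mpr (e.le_iff_le.mpr (Fin.mk_le_mk.mpr (by omega)))
  have hsurj : ∀ t ∈ V, ∃ m, m ≤ n - 1 ∧ w m = t := by
    intro t ht
    obtain ⟨i, hi⟩ := e.surjective ⟨t, ht⟩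
    refine ⟨↑i, by have := i.isLt; omega, ?_⟩
    simp only [hwdef]
    have hmk : (⟨min (↑i) (n - 1), by omega⟩ : Fin n) = i :=
      Fin.ext (by have := i.isLt; simp only [Fin.val_mk]; omega)
    rw [hmk, hi]
  have hw0 : w 0 = 0 := by
    obtain ⟨m, hm, hm0⟩ := hsurj 0 h0V
    have h1 : w 0 ≤ 0 := hm0 ▸ hwmono (Nat.zero_le m)
    exact le_antisymm h1 (hVnonneg _ (hwmem 0))
  have hwtop : w (n - 1) = 1 := by
    obtain ⟨m, hm, hm1⟩ := hsurj 1 h1V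
    have h1 : 1 ≤ w (n - 1) := hm1 ▸ hwmono hm
    exact le_antisymm (hVle1 _ (hwmem _)) h1
  -- the construction
  set A : Fin (n - 1) → Fin N → Set L :=
    fun k j => {x | g (↑j) x ≤ w ↑k ∧ w ↑k < g (↑j + 1) x} with hAdef
  set a : Fin (n - 1) → ℝ := fun k => w (↑k + 1) - w ↑k with hadef
  refine ⟨n - 1, by omega, A, a, ?_, ?_, ?_, ?_, ?_, ?_⟩
  · -- measurability
    intro k j
    exact (measurableSet_le (hgmeas _) measurable_const).inter
      (measurableSet_lt measurable_const (hgmeas _))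
  · -- disjointness
    intro k j j' hne
    have key : ∀ {j j' : Fin N}, (j : ℕ) < (j' : ℕ) → Disjoint (A k j) (A k j') := by
      intro j j' hjj'
      rw [Set.disjoint_left]
      rintro x ⟨h1, h2⟩ ⟨h3, h4⟩
      have hle : g (↑j + 1) x ≤ g (↑j') x := hgmono x (by omega)
      linarith
    have hvne : (j : ℕ) ≠ (j' : ℕ) := fun h => hne (Fin.ext h)
    rcases hvne.lt_or_gt with h | h
    · exact key h
    · exact (key h).symm
  · -- covering
    intro k
    ext x
    simp only [Set.mem_iUnion, Set.mem_univ, iff_true]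
    have hkK : (k : ℕ) < n - 1 := k.isLt
    have hwk1 : w ↑k < 1 := by
      rw [← hwtop]
      exact (hw_lt ↑k (n - 1) (by omega) le_rfl).mpr (by omega)
    have hwk0 : (0 : ℝ) ≤ w ↑k := hw0 ▸ hwmono (Nat.zero_le _)
    have hsne : ((Finset.range (N + 1)).filter fun j => g j x ≤ w ↑k).Nonempty :=
      ⟨0, by
        simp only [Finset.mem_filter, Finset.mem_range]
        exact ⟨by omega, by rw [hg0 x]; exact hwk0⟩⟩
    obtain ⟨j₀, ⟨hj₀lt, hj₀le⟩, hj₀max⟩ : ∃ j₀, (j₀ < N + 1 ∧ g j₀ x ≤ w ↑k) ∧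
        ∀ b < N + 1, g b x ≤ w ↑k → b ≤ j₀ := by
      refine ⟨Finset.max' _ hsne, ?_, ?_⟩
      · have h := Finset.max'_mem _ hsne
        simpa only [Finset.mem_filter, Finset.mem_range] using h
      · intro b hb hble
        exact Finset.le_max' _ b (by
          simp only [Finset.mem_filter, Finset.mem_range]
          exact ⟨hb, hble⟩)
    have hj₀N : j₀ < N := by
      rcases Nat.lt_or_ge j₀ N with h | h
      · exact h
      · exfalso
        have hje : j₀ = N := by omega
        rw [hje, hgN x] at hj₀le
        linarith
    have hnext : w ↑k < g (j₀ + 1) x := by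
      by_contra h
      push_neg at h
      have := hj₀max (j₀ + 1) (by omega) h
      omega
    exact ⟨⟨j₀, hj₀N⟩, hj₀le, hnext⟩
  · -- nonnegativity of coefficients
    intro k
    simp only [hadef, sub_nonneg]
    exact hwmono (by omega)
  · -- coefficients sum to 1
    have h1 : ∑ k : Fin (n - 1), a k = ∑ k ∈ Finset.range (n - 1), (w (k + 1) - w k) :=
      Fin.sum_univ_eq_sum_range (fun k => w (k + 1) - w k) (n - 1)
    rw [h1, Finset.sum_range_sub, hw0, hwtop, sub_zero]
  · -- the representation
    intro j x
    have hj1 : (j : ℕ) + 1 ≤ N := j.isLt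
    obtain ⟨m, hm, hwm⟩ := hsurj _ (hmemV (↑j) x (by omega))
    obtain ⟨m', hm', hwm'⟩ := hsurj _ (hmemV (↑j + 1) x hj1)
    have hmm' : m ≤ m' := by
      rw [← hw_le m m' hm hm', hwm, hwm']
      exact hgmono x (by omega)
    have hstep : ∀ k : Fin (n - 1), a k * (A k j).indicator 1 x
        = if m ≤ (k : ℕ) ∧ (k : ℕ) < m' then w (↑k + 1) - w ↑k else 0 := by
      intro k
      have hkK : (k : ℕ) < n - 1 := k.isLt
      have hcond : x ∈ A k j ↔ (m ≤ (k : ℕ) ∧ (k : ℕ) < m') := by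
        simp only [hAdef, Set.mem_setOf_eq]
        rw [← hwm, ← hwm', hw_le m ↑k hm (by omega), hw_lt ↑k m' (by omega) hm']
      rw [Set.indicator_apply]
      by_cases h : x ∈ A k j
      · rw [if_pos h, if_pos (hcond.mp h)]
        simp [hadef]
      · rw [if_neg h, if_neg (fun hc => h (hcond.mpr hc))]
        simp
    have hRHS : ∑ k : Fin (n - 1), a k * (A k j).indicator 1 x = w m' - w m := by
      rw [Finset.sum_congr rfl (fun k _ => hstep k)]
      have h1 : ∑ k : Fin (n - 1), (if m ≤ (k : ℕ) ∧ (k : ℕ) < m' then w (↑k + 1) - w ↑k else 0)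
          = ∑ k ∈ Finset.range (n - 1), (if m ≤ k ∧ k < m' then w (k + 1) - w k else 0) :=
        Fin.sum_univ_eq_sum_range (fun k => if m ≤ k ∧ k < m' then w (k + 1) - w k else 0) (n - 1)
      rw [h1]
      have h2 : ∀ k : ℕ, (if m ≤ k ∧ k < m' then w (k + 1) - w k else 0)
          = if k ∈ Finset.Ico m m' then w (k + 1) - w k else 0 := by
        intro k
        simp [Finset.mem_Ico]
      rw [Finset.sum_congr rfl (fun k _ => h2 k), Finset.sum_ite_mem]
      have h3 : Finset.range (n - 1) ∩ Finset.Ico m m' = Finset.Ico m m' := by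
        apply Finset.inter_eq_right.mpr
        intro k hk
        simp only [Finset.mem_Ico] at hk
        simp only [Finset.mem_range]
        omega
      rw [h3, Finset.sum_Ico_eq_sub _ hmm', Finset.sum_range_sub, Finset.sum_range_sub]
      ring
    rw [hRHS, hwm, hwm', hgsucc, hf'eq]
    ring
end
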